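/- Let g be a finite-dimensional real Lie algebra of constant height and h ⊊ g a proper ideal. Then the quotient Lie algebra g/h has constant height equal to the height of g. -/
import Mathlib

open ExteriorAlgebra Module

/-- The Chevalley–Eilenberg differential of a 1-form, as an element of `∧² g*`. -/
noncomputable def ceD (L : Type*) [LieRing L] [LieAlgebra ℝ L] [Module.Finite ℝ L]
    (ξ : Module.Dual ℝ L) : ExteriorAlgebra ℝ (Module.Dual ℝ L) :=
  let b := Module.Free.chooseBasis ℝ L
  (-(1 : ℝ)/2) • ∑ i, ∑ j, ξ ⁅b i, b j⁆ •
    (ExteriorAlgebra.ι ℝ (b.coord i) * ExteriorAlgebra.ι ℝ (b.coord j))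

/-- The Chevalley–Eilenberg differential of `ξ` as a bilinear form:
`(d_g ξ)(X,Y) = -ξ([X,Y])`.  Note that `dForm L ξ Y = ad*_Y ξ` is also the
coadjoint action, `(ad*_Y ξ)(X) = -ξ([Y,X])`. -/
noncomputable def dForm (L : Type*) [LieRing L] [LieAlgebra ℝ L]
    (ξ : Module.Dual ℝ L) : L →ₗ[ℝ] L →ₗ[ℝ] ℝ :=
  LinearMap.mk₂ ℝ (fun X Y => -ξ ⁅X, Y⁆)
    (fun X X' Y => by simp [add_lie]; ring)
    (fun c X Y => by simp [smul_lie])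
    (fun X Y Y' => by simp [lie_add]; ring)
    (fun c X Y => by simp [lie_smul])

set_option synthInstance.maxHeartbeats 1000000 in
lemma iota_mul_expand {V : Type*} [AddCommGroup V] [Module ℝ V] {n : Type*} [Fintype n]
    (b : Basis n ℝ V) (α β : Module.Dual ℝ V) :
    ι ℝ α * ι ℝ β = ∑ i, ∑ j, (α (b i) * β (b j)) •
      (ι ℝ (b.coord i) * ι ℝ (b.coord j)) := by
  conv_lhs => rw [← b.sum_dual_apply_smul_coord α, ← b.sum_dual_apply_smul_coord β]
  rw [map_sum, map_sum, Finset.sum_mul]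
  refine Finset.sum_congr rfl fun i _ => ?_
  rw [Finset.mul_sum]
  refine Finset.sum_congr rfl fun j _ => ?_
  rw [map_smul, map_smul, smul_mul_assoc, mul_smul_comm, smul_smul]

lemma apply_bracket_expand {M : Type*} [LieRing M] [LieAlgebra ℝ M] {n : Type*} [Fintype n]
    (c : Basis n ℝ M) (ξ : Module.Dual ℝ M) (u v : M) :
    (ξ ⁅u, v⁆ : ℝ) = ∑ i, ∑ j, (c.coord i u * c.coord j v) * ξ ⁅c i, c j⁆ := by
  have key : ∀ x y : M, (ξ ⁅x, y⁆ : ℝ) = -(dForm M ξ x y) := fun x y => by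
    simp [dForm]
  rw [key]
  conv_lhs => rw [← c.sum_repr u, ← c.sum_repr v]
  simp only [map_sum, map_smul, LinearMap.sum_apply, LinearMap.smul_apply, smul_eq_mul,
    Finset.mul_sum, Finset.sum_neg_distrib, neg_mul, mul_neg, neg_neg, Basis.coord_apply]
  rw [← Finset.sum_neg_distrib, Finset.sum_comm]
  refine Finset.sum_congr rfl fun i _ => ?_
  rw [← Finset.sum_neg_distrib]
  refine Finset.sum_congr rfl fun j _ => ?_
  rw [key]
  ring

lemma sum4_comm {A : Type*} [AddCommMonoid A] {m n : Type*} [Fintype m] [Fintype n]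
    (f : m → m → n → n → A) :
    ∑ i, ∑ j, ∑ k, ∑ l, f i j k l = ∑ k, ∑ l, ∑ i, ∑ j, f i j k l :=
  calc ∑ i, ∑ j, ∑ k, ∑ l, f i j k l
      = ∑ i, ∑ k, ∑ j, ∑ l, f i j k l :=
        Finset.sum_congr rfl fun i _ => Finset.sum_comm
    _ = ∑ k, ∑ i, ∑ j, ∑ l, f i j k l := Finset.sum_comm
    _ = ∑ k, ∑ i, ∑ l, ∑ j, f i j k l :=
        Finset.sum_congr rfl fun k _ => Finset.sum_congr rfl fun i _ => Finset.sum_comm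
    _ = ∑ k, ∑ l, ∑ i, ∑ j, f i j k l :=
        Finset.sum_congr rfl fun k _ => Finset.sum_comm

set_option synthInstance.maxHeartbeats 1000000 in
set_option maxHeartbeats 1000000 in
lemma map_ceD {L M : Type*} [LieRing L] [LieAlgebra ℝ L] [Module.Finite ℝ L]
    [LieRing M] [LieAlgebra ℝ M] [Module.Finite ℝ M]
    (π : L →ₗ[ℝ] M) (hπ : ∀ x y : L, π ⁅x, y⁆ = ⁅π x, π y⁆) (ξ : Module.Dual ℝ M) :
    ExteriorAlgebra.map π.dualMap (ceD M ξ) = ceD L (π.dualMap ξ) := by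
  classical
  set b := Module.Free.chooseBasis ℝ L with hb
  set c := Module.Free.chooseBasis ℝ M with hc
  unfold ceD
  rw [map_smul, map_sum]
  simp only [map_sum, map_smul, map_mul, map_apply_ι]
  congr 1
  calc ∑ i, ∑ j, ξ ⁅c i, c j⁆ •
        (ι ℝ (π.dualMap (c.coord i)) * ι ℝ (π.dualMap (c.coord j)))
      = ∑ i, ∑ j, ∑ k, ∑ l, (ξ ⁅c i, c j⁆ *
          ((c.coord i) (π (b k)) * (c.coord j) (π (b l)))) •
          (ι ℝ (b.coord k) * ι ℝ (b.coord l)) := by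
        refine Finset.sum_congr rfl fun i _ => Finset.sum_congr rfl fun j _ => ?_
        rw [iota_mul_expand b, Finset.smul_sum]
        refine Finset.sum_congr rfl fun k _ => ?_
        rw [Finset.smul_sum]
        refine Finset.sum_congr rfl fun l _ => ?_
        rw [smul_smul]
        simp only [LinearMap.dualMap_apply]
    _ = ∑ k, ∑ l, (∑ i, ∑ j, (ξ ⁅c i, c j⁆ *
          ((c.coord i) (π (b k)) * (c.coord j) (π (b l))))) •
          (ι ℝ (b.coord k) * ι ℝ (b.coord l)) := by
        simp only [Finset.sum_smul]
        exact sum4_comm _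
    _ = ∑ k, ∑ l, (π.dualMap ξ) ⁅b k, b l⁆ • (ι ℝ (b.coord k) * ι ℝ (b.coord l)) := by
        refine Finset.sum_congr rfl fun k _ => Finset.sum_congr rfl fun l _ => ?_
        congr 1
        rw [LinearMap.dualMap_apply, hπ, apply_bracket_expand c ξ (π (b k)) (π (b l))]
        exact Finset.sum_congr rfl fun i _ => Finset.sum_congr rfl fun j _ => by ring

set_option maxHeartbeats 2000000 in
set_option synthInstance.maxHeartbeats 1000000 in
/-- if `g` has constant height `k` and `h ⊊ g` is a proper ideal, then
the quotient `g/h` has constant height `k` as well. -/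
theorem quotient_constant_height (L : Type*) [LieRing L] [LieAlgebra ℝ L]
    [FiniteDimensional ℝ L] (I : LieIdeal ℝ L) (hI : I ≠ ⊤) (k : ℕ)
    (h : ∀ ξ : Module.Dual ℝ L, ξ ≠ 0 →
      ι ℝ ξ * (ceD L ξ) ^ k ≠ 0 ∧ ι ℝ ξ * (ceD L ξ) ^ (k + 1) = 0) :
    ∀ ξ : Module.Dual ℝ (L ⧸ I), ξ ≠ 0 →
      ι ℝ ξ * (ceD (L ⧸ I) ξ) ^ k ≠ 0 ∧ ι ℝ ξ * (ceD (L ⧸ I) ξ) ^ (k + 1) = 0 := by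
  intro ξ hξ
  let π : L →ₗ[ℝ] L ⧸ I := (I : Submodule ℝ L).mkQ
  have hπsurj : Function.Surjective π := Submodule.mkQ_surjective _
  have hπ : ∀ x y : L, π ⁅x, y⁆ = ⁅π x, π y⁆ := fun x y =>
    LieSubmodule.Quotient.mk_bracket I x y
  have hf : Function.Injective π.dualMap := by
    intro a b hab
    ext v
    obtain ⟨x, rfl⟩ := hπsurj v
    exact congrFun (congrArg (fun (f : Module.Dual ℝ L) => (f : L → ℝ)) hab) x
  have hξ' : π.dualMap ξ ≠ 0 := fun h0 => hξ (hf (by rw [h0, map_zero]))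
  obtain ⟨g, hg⟩ := π.dualMap.exists_leftInverse_of_injective (LinearMap.ker_eq_bot.mpr hf)
  have hinj : Function.Injective (ExteriorAlgebra.map π.dualMap) :=
    ExteriorAlgebra.map_injective ⟨g, hg⟩
  have key : ∀ m : ℕ, ExteriorAlgebra.map π.dualMap (ι ℝ ξ * (ceD (L ⧸ I) ξ) ^ m)
      = ι ℝ (π.dualMap ξ) * (ceD L (π.dualMap ξ)) ^ m := fun m => by
    rw [map_mul, map_pow, map_apply_ι, map_ceD π hπ ξ]
  obtain ⟨h1, h2⟩ := h (π.dualMap ξ) hξ'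
  constructor
  · intro h0
    apply h1
    rw [← key k, h0, map_zero]
  · apply hinj
    rw [key, h2, map_zero]
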